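/- Let ν be a probability measure on ℝ with finite second moment, let q ≥ 1, let g ∈ C²(ℝ) with ‖g''‖_{L^q(ℝ)} < ∞, and let a ∈ ℝ. Then Var_ν( g'(a − ·) ) ≤ 2^{−1/q}·‖g''‖²_{L^q(ℝ)}·( Var_ν(id) )^{(q−1)/q}. -/

import Mathlib

/-!
With `r = (q - 1) / q`, the fundamental theorem of calculus and Hölder's inequality on `[y, x]`
make `g'`, hence `f = g'(a - ·)`, `r`-Hölder with constant `‖g''‖_q`. For independent copies
`X, Y ~ ν`, `2 Var f = E (f X - f Y)²`; the Hölder bound gives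
`E (f X - f Y)² ≤ ‖g''‖_q² E ((X - Y)²) ^ r`, and Jensen's inequality for the concave map
`u ↦ u ^ r` bounds this by `‖g''‖_q² (2 Var id) ^ r`. Since `2 ^ (r - 1) = 2 ^ (-1/q)`, this is the claim.
-/

open MeasureTheory Real Filter

noncomputable section

/-- Covariance of two functions under a measure on `ℝ`. -/
def covM (ν : Measure ℝ) (f g : ℝ → ℝ) : ℝ :=
  (∫ t, f t * g t ∂ν) - (∫ t, f t ∂ν) * (∫ t, g t ∂ν)

/-- Variance of a function under a measure on `ℝ`. -/
def varM (ν : Measure ℝ) (f : ℝ → ℝ) : ℝ := covM ν f f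

/-- Variance of the identity function under a measure on `ℝ`. -/
def varId (ν : Measure ℝ) : ℝ := varM ν (fun t => t)

/-- `L^q(ℝ)` norm. -/
def LqNorm (f : ℝ → ℝ) (q : ℝ) : ℝ := (∫ t : ℝ, |f t| ^ q) ^ (1/q)

lemma rpow_le_one_add {x r : ℝ} (hx : 0 ≤ x) (hr0 : 0 ≤ r) (hr1 : r ≤ 1) : x ^ r ≤ 1 + x := by
  rcases le_total x 1 with h | h
  · linarith [Real.rpow_le_one hx h hr0]
  · linarith [Real.rpow_le_self_of_one_le h hr1]

lemma integrable_rpow_of_nonneg {α : Type*} [MeasurableSpace α] {μ : Measure α}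
    [IsFiniteMeasure μ] {h : α → ℝ} {r : ℝ} (hr0 : 0 ≤ r) (hr1 : r ≤ 1) (hh : 0 ≤ h)
    (hint : Integrable h μ) : Integrable (fun x => h x ^ r) μ :=
  ((integrable_const 1).add hint).mono' (hint.1.aemeasurable.pow_const r).aestronglyMeasurable
    (ae_of_all _ fun x => by
      rw [Real.norm_of_nonneg (Real.rpow_nonneg (hh x) r)]
      exact rpow_le_one_add (hh x) hr0 hr1)

lemma integral_rpow_le_rpow_integral {α : Type*} [MeasurableSpace α] {μ : Measure α}
    [IsProbabilityMeasure μ] {h : α → ℝ} {r : ℝ} (hr0 : 0 ≤ r) (hr1 : r ≤ 1) (hh : 0 ≤ h)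
    (hint : Integrable h μ) : ∫ x, h x ^ r ∂μ ≤ (∫ x, h x ∂μ) ^ r :=
  (Real.concaveOn_rpow hr0 hr1).le_map_integral (Real.continuous_rpow_const hr0).continuousOn
    isClosed_Ici (ae_of_all _ hh) hint (integrable_rpow_of_nonneg hr0 hr1 hh hint)

lemma memLp_ofReal_of_integrable_abs_rpow {h : ℝ → ℝ} {q : ℝ} (hq : 0 < q)
    (hm : AEStronglyMeasurable h) (hint : Integrable (fun t => |h t| ^ q)) :
    MemLp h (ENNReal.ofReal q) := by
  refine (integrable_norm_rpow_iff hm (by simpa using hq) ENNReal.ofReal_ne_top).mp ?_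
  simpa only [ENNReal.toReal_ofReal hq.le, Real.norm_eq_abs] using hint

lemma setIntegral_abs_le_LqNorm_mul {h : ℝ → ℝ} {q : ℝ} (hq : 1 ≤ q)
    (hm : AEStronglyMeasurable h) (hint : Integrable (fun t => |h t| ^ q))
    {S : Set ℝ} (hS : volume S ≠ ⊤) :
    ∫ t in S, |h t| ≤ LqNorm h q * volume.real S ^ ((q - 1) / q) := by
  have hq0 : 0 < q := one_pos.trans_le hq
  have hmem : MemLp h (ENNReal.ofReal q) (volume.restrict S) :=
    (memLp_ofReal_of_integrable_abs_rpow hq0 hm hint).restrict S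
  have : IsFiniteMeasure (volume.restrict S) := isFiniteMeasure_restrict.mpr hS
  have hle := eLpNorm_le_eLpNorm_mul_rpow_measure_univ (μ := volume.restrict S)
    (ENNReal.one_le_ofReal.mpr hq) hm.restrict
  rw [eLpNorm_one_eq_lintegral_enorm, ← ofReal_integral_norm_eq_lintegral_enorm
    (hmem.integrable (ENNReal.one_le_ofReal.mpr hq)),
    hmem.eLpNorm_eq_integral_rpow_norm (by simpa using hq0) ENNReal.ofReal_ne_top,
    Measure.restrict_apply_univ, ← ofReal_measureReal hS, ENNReal.toReal_ofReal hq0.le,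
    ENNReal.toReal_one, show 1 / 1 - 1 / q = (q - 1) / q by field_simp,
    ENNReal.ofReal_rpow_of_nonneg measureReal_nonneg (div_nonneg (by linarith) hq0.le),
    ← ENNReal.ofReal_mul (by positivity), ENNReal.ofReal_le_ofReal_iff (by positivity)] at hle
  have hrestrict : (∫ t in S, |h t| ^ q) ^ q⁻¹ ≤ LqNorm h q := by
    rw [LqNorm, one_div]
    have hpos : 0 ≤ fun t => |h t| ^ q := fun t => by positivity
    exact Real.rpow_le_rpow (integral_nonneg hpos)
      (setIntegral_le_integral hint (ae_of_all _ hpos)) (by positivity)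
  simp only [Real.norm_eq_abs] at hle
  exact hle.trans (by gcongr)

lemma abs_sub_le_LqNorm_deriv_mul_rpow {φ : ℝ → ℝ} (hφ : ContDiff ℝ 1 φ) {q : ℝ} (hq : 1 ≤ q)
    (hint : Integrable (fun t => |deriv φ t| ^ q)) (x y : ℝ) :
    |φ x - φ y| ≤ LqNorm (deriv φ) q * |x - y| ^ ((q - 1) / q) := by
  wlog hxy : y ≤ x generalizing x y
  · rw [abs_sub_comm, abs_sub_comm x]
    exact this y x (le_of_not_ge hxy)
  have hcont : Continuous (deriv φ) := hφ.continuous_deriv le_rfl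
  have hFTC : ∫ t in y..x, deriv φ t = φ x - φ y :=
    intervalIntegral.integral_deriv_eq_sub (fun t _ => (hφ.differentiable one_ne_zero) t)
      (hcont.intervalIntegrable y x)
  calc |φ x - φ y| ≤ ∫ t in Set.Ioc y x, |deriv φ t| := by
        rw [← hFTC, intervalIntegral.integral_of_le hxy]
        exact abs_integral_le_integral_abs
    _ ≤ LqNorm (deriv φ) q * volume.real (Set.Ioc y x) ^ ((q - 1) / q) :=
        setIntegral_abs_le_LqNorm_mul hq hcont.aestronglyMeasurable hint measure_Ioc_lt_top.ne
    _ = LqNorm (deriv φ) q * |x - y| ^ ((q - 1) / q) := by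
        rw [Real.volume_real_Ioc_of_le hxy, abs_of_nonneg (sub_nonneg.mpr hxy)]

section Variance

variable {ν : Measure ℝ} [IsProbabilityMeasure ν] {f : ℝ → ℝ}

lemma memLp_two_prod_sub (hf : MemLp f 2 ν) :
    MemLp (fun z : ℝ × ℝ => f z.1 - f z.2) 2 (ν.prod ν) :=
  (hf.comp_measurePreserving measurePreserving_fst).sub
    (hf.comp_measurePreserving measurePreserving_snd)

lemma integral_prod_sub_sq (hf : MemLp f 2 ν) :
    ∫ z : ℝ × ℝ, (f z.1 - f z.2) ^ 2 ∂(ν.prod ν) = 2 * varM ν f := by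
  have hf1 : Integrable f ν := hf.integrable one_le_two
  have hf2 : Integrable (fun t => f t ^ 2) ν := hf.integrable_sq
  have hsq₁ : Integrable (fun z : ℝ × ℝ => f z.1 ^ 2) (ν.prod ν) := hf2.comp_fst ν
  have hsq₂ : Integrable (fun z : ℝ × ℝ => f z.2 ^ 2) (ν.prod ν) := hf2.comp_snd ν
  have hsum : Integrable (fun z : ℝ × ℝ => f z.1 ^ 2 + f z.2 ^ 2) (ν.prod ν) := hsq₁.add hsq₂
  have hmul : Integrable (fun z : ℝ × ℝ => 2 * (f z.1 * f z.2)) (ν.prod ν) :=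
    (hf1.mul_prod hf1).const_mul 2
  have hexpand : (fun z : ℝ × ℝ => (f z.1 - f z.2) ^ 2)
      = fun z => f z.1 ^ 2 + f z.2 ^ 2 - 2 * (f z.1 * f z.2) := by
    funext z; ring
  rw [hexpand, integral_sub hsum hmul, integral_add hsq₁ hsq₂,
    integral_const_mul, integral_prod_mul f f, integral_fun_fst (f := fun t => f t ^ 2),
    integral_fun_snd (f := fun t => f t ^ 2)]
  simp only [varM, covM, probReal_univ, sq]
  ring

lemma varM_nonneg (hf : MemLp f 2 ν) : 0 ≤ varM ν f := by
  have h : 0 ≤ ∫ z : ℝ × ℝ, (f z.1 - f z.2) ^ 2 ∂(ν.prod ν) := integral_nonneg fun z => sq_nonneg _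
  linarith [integral_prod_sub_sq hf]

lemma memLp_two_of_abs_sub_le_rpow (hmom : MemLp (fun t : ℝ => t) 2 ν)
    (hm : AEStronglyMeasurable f ν) {M r : ℝ} (hr0 : 0 ≤ r) (hr1 : r ≤ 1)
    (hH : ∀ s t, |f s - f t| ≤ M * |s - t| ^ r) : MemLp f 2 ν := by
  have hmaj : MemLp (fun t : ℝ => (|f 0| + |M|) + |M| * ‖t‖) 2 ν :=
    (memLp_const (|f 0| + |M|)).add (hmom.norm.const_mul |M|)
  refine hmaj.of_le hm (ae_of_all _ fun t => ?_)
  have hgrowth : |f t - f 0| ≤ |M| * (1 + |t|) :=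
    calc |f t - f 0| ≤ M * |t| ^ r := by simpa using hH t 0
      _ ≤ |M| * |t| ^ r := by gcongr; exact le_abs_self M
      _ ≤ |M| * (1 + |t|) := by gcongr; exact rpow_le_one_add (abs_nonneg t) hr0 hr1
  calc ‖f t‖ = |f 0 + (f t - f 0)| := by rw [Real.norm_eq_abs, add_sub_cancel]
    _ ≤ |f 0| + |f t - f 0| := abs_add_le _ _
    _ ≤ (|f 0| + |M|) + |M| * ‖t‖ := by rw [Real.norm_eq_abs]; linarith
    _ ≤ ‖(|f 0| + |M|) + |M| * ‖t‖‖ := Real.le_norm_self _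

lemma two_mul_varM_le_of_abs_sub_le_rpow (hmom : MemLp (fun t : ℝ => t) 2 ν)
    (hf : MemLp f 2 ν) {M r : ℝ} (hr0 : 0 ≤ r) (hr1 : r ≤ 1)
    (hH : ∀ s t, |f s - f t| ≤ M * |s - t| ^ r) :
    2 * varM ν f ≤ M ^ 2 * (2 * varId ν) ^ r := by
  have hpoint : ∀ z : ℝ × ℝ, (f z.1 - f z.2) ^ 2 ≤ M ^ 2 * ((z.1 - z.2) ^ 2) ^ r := fun z =>
    calc (f z.1 - f z.2) ^ 2 = |f z.1 - f z.2| ^ 2 := (sq_abs _).symm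
      _ ≤ (M * |z.1 - z.2| ^ r) ^ 2 := pow_le_pow_left₀ (abs_nonneg _) (hH _ _) 2
      _ = M ^ 2 * ((z.1 - z.2) ^ 2) ^ r := by
        rw [mul_pow, Real.rpow_pow_comm (abs_nonneg _), sq_abs]
  have hsq : Integrable (fun z : ℝ × ℝ => (z.1 - z.2) ^ 2) (ν.prod ν) :=
    (memLp_two_prod_sub hmom).integrable_sq
  have hsq_nonneg : 0 ≤ fun z : ℝ × ℝ => (z.1 - z.2) ^ 2 := fun z => sq_nonneg _
  calc 2 * varM ν f = ∫ z, (f z.1 - f z.2) ^ 2 ∂(ν.prod ν) := (integral_prod_sub_sq hf).symm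
    _ ≤ ∫ z, M ^ 2 * ((z.1 - z.2) ^ 2) ^ r ∂(ν.prod ν) :=
        integral_mono_of_nonneg (ae_of_all _ fun z => sq_nonneg _)
          ((integrable_rpow_of_nonneg hr0 hr1 hsq_nonneg hsq).const_mul _) (ae_of_all _ hpoint)
    _ = M ^ 2 * ∫ z, ((z.1 - z.2) ^ 2) ^ r ∂(ν.prod ν) := integral_const_mul _ _
    _ ≤ M ^ 2 * (∫ z, (z.1 - z.2) ^ 2 ∂(ν.prod ν)) ^ r := by
        gcongr
        exact integral_rpow_le_rpow_integral hr0 hr1 hsq_nonneg hsq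
    _ = M ^ 2 * (2 * varId ν) ^ r := by rw [integral_prod_sub_sq hmom, varId]

end Variance

/-- **Statement 15** (the key variance estimate (4.13)). -/
theorem statement15
    (ν : Measure ℝ) [IsProbabilityMeasure ν]
    (hmom : MemLp (fun t : ℝ => t) 2 ν)
    {q : ℝ} (hq : 1 ≤ q)
    {g : ℝ → ℝ} (hg : ContDiff ℝ 2 g)
    (hgq : Integrable (fun t : ℝ => |deriv (deriv g) t| ^ q))
    (a : ℝ) :
    varM ν (fun t => deriv g (a - t))
      ≤ (2:ℝ) ^ (-(1/q)) * (LqNorm (deriv (deriv g)) q)^2 * (varId ν) ^ ((q-1)/q) := by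
  have hq0 : 0 < q := one_pos.trans_le hq
  have hr0 : 0 ≤ (q - 1) / q := div_nonneg (by linarith) hq0.le
  have hr1 : (q - 1) / q ≤ 1 := (div_le_one hq0).mpr (by linarith)
  have hg' : ContDiff ℝ 1 (deriv g) := hg.deriv'
  have hHolder : ∀ s t, |deriv g (a - s) - deriv g (a - t)|
      ≤ LqNorm (deriv (deriv g)) q * |s - t| ^ ((q - 1) / q) := fun s t => by
    simpa [abs_sub_comm t s] using abs_sub_le_LqNorm_deriv_mul_rpow hg' hq hgq (a - s) (a - t)
  have hf : MemLp (fun t => deriv g (a - t)) 2 ν :=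
    memLp_two_of_abs_sub_le_rpow hmom
      (hg'.continuous.comp (continuous_sub_left a)).aestronglyMeasurable hr0 hr1 hHolder
  have hvar := two_mul_varM_le_of_abs_sub_le_rpow hmom hf hr0 hr1 hHolder
  have htwo : (2:ℝ) ^ ((q - 1) / q) = 2 ^ (-(1/q)) * 2 := by
    rw [← Real.rpow_add_one two_ne_zero]
    congr 1
    field_simp
    ring
  rw [Real.mul_rpow (y := varId ν) zero_le_two (varM_nonneg hmom), htwo] at hvar
  linarith

end
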